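/- Assume each φ_{ij} is convex, λ > 0, and ν > 0, R > 0. Let (x^k)_{k≥0} in ℝ^d and reals h_{ij}^k (i ∈ [n], j ∈ [m], k ≥ 0) satisfy: for every k and every i, j, h_{ij}^k is a convex combination of h_{ij}(x^0), h_{ij}(x^1), …, h_{ij}(x^k); and x^{k+1} = x^k − (H^k + λ I)^{-1} ∇P(x^k) where H^k = (1/(nm)) Σ_{i,j} h_{ij}^k a_{ij} a_{ij}ᵀ. If ‖x^0 − x*‖² ≤ λ²/(12 ν² R⁶), then ‖x^k − x*‖² ≤ λ²/(12 ν² R⁶) for all k ≥ 0. -/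

import Mathlib

open MeasureTheory Filter
open scoped BigOperators

noncomputable section

abbrev Euc (d : ℕ) := EuclideanSpace ℝ (Fin d)

/-- Real inner product on Euclidean space. -/
def rinner {d : ℕ} (a x : Euc d) : ℝ := inner ℝ a x

/-- The rank-one matrix `a aᵀ`. -/
def outerMat {d : ℕ} (a : Euc d) : Matrix (Fin d) (Fin d) ℝ := fun p q => a p * a q

/-- `(1/(nm)) ∑_{ij} c_{ij} a_{ij} a_{ij}ᵀ`. -/
def Hmat {n m d : ℕ} (a : Fin n → Fin m → Euc d) (c : Fin n → Fin m → ℝ) :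
    Matrix (Fin d) (Fin d) ℝ :=
  ((n : ℝ) * m)⁻¹ • ∑ i, ∑ j, c i j • outerMat (a i j)

/-- Matrix-vector multiplication as a map on Euclidean space. -/
def mulVecE {d : ℕ} (M : Matrix (Fin d) (Fin d) ℝ) (v : Euc d) : Euc d := WithLp.toLp 2 (M.mulVec v)

/-- The vector `h_i(y) = (φ''_{i1}(⟨a_{i1},y⟩), …, φ''_{im}(⟨a_{im},y⟩)) ∈ ℝ^m`. -/
def hvecOf {n m d : ℕ} (a : Fin n → Fin m → Euc d) (φ'' : Fin n → Fin m → ℝ → ℝ)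
    (i : Fin n) (y : Euc d) : Euc m :=
  WithLp.toLp 2 (fun j => φ'' i j (rinner (a i j) y))

/-- Componentwise positive part on ℝ^m. -/
def posPartE {m : ℕ} (v : Euc m) : Euc m := WithLp.toLp 2 (fun j => max (v j) 0)

/-!
Write `δ = x^k - x*` and `M = H^k + λ I`. Since `∇P(x*) = 0`, the Newton error is
`x^{k+1} - x* = M⁻¹ (M δ - (∇P(x^k) - ∇P(x*)))`, and the residual `M δ - (∇P(x^k) - ∇P(x*))` is the
average of `(h^k_{ij} ⟨a_{ij}, δ⟩ - (φ'_{ij}(⟨a_{ij}, x^k⟩) - φ'_{ij}(⟨a_{ij}, x*⟩))) a_{ij}`.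
By strong induction all earlier iterates lie in the ball of radius `r` about `x*`, so the convex
combination `h^k_{ij}` is within `ν R r` of `φ''_{ij}(⟨a_{ij}, x*⟩)`, and the mean value theorem
bounds each coefficient by `2 ν (R r)²`. Convexity makes `h^k_{ij} ≥ 0`, so `⟨M w, w⟩ ≥ λ ‖w‖²` and
`‖M⁻¹‖ ≤ 1/λ`. Hence `‖x^{k+1} - x*‖ ≤ 2 ν R³ r² / λ ≤ r` whenever `2 ν R³ r ≤ λ`, which holds for
`r² = λ² / (12 ν² R⁶)`.
-/

open Finset

section Averages

variable {n m : ℕ}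

def doubleAvg {E : Type*} [AddCommGroup E] [Module ℝ E] (n m : ℕ) (v : Fin n → Fin m → E) : E :=
  ((n : ℝ) * m)⁻¹ • ∑ i, ∑ j, v i j

lemma doubleAvg_sub {E : Type*} [AddCommGroup E] [Module ℝ E] (v w : Fin n → Fin m → E) :
    doubleAvg n m (fun i j => v i j - w i j) = doubleAvg n m v - doubleAvg n m w := by
  simp only [doubleAvg, sum_sub_distrib, smul_sub]

lemma norm_doubleAvg_le {E : Type*} [SeminormedAddCommGroup E] [NormedSpace ℝ E]
    {v : Fin n → Fin m → E} {B : ℝ} (hB : 0 ≤ B) (hv : ∀ i j, ‖v i j‖ ≤ B) :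
    ‖doubleAvg n m v‖ ≤ B := by
  have hsum : ‖∑ i, ∑ j, v i j‖ ≤ (n : ℝ) * m * B :=
    calc ‖∑ i, ∑ j, v i j‖ ≤ ∑ i, ∑ j, ‖v i j‖ :=
          (norm_sum_le _ _).trans (sum_le_sum fun i _ => norm_sum_le _ _)
      _ ≤ ∑ _i : Fin n, ∑ _j : Fin m, B := by gcongr with i _ j _; exact hv i j
      _ = (n : ℝ) * m * B := by simp [mul_assoc]
  rw [doubleAvg, norm_smul_of_nonneg (by positivity)]
  rcases eq_or_ne ((n : ℝ) * m) 0 with h | h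
  · simpa [h] using hB
  · calc ((n : ℝ) * m)⁻¹ * ‖∑ i, ∑ j, v i j‖ ≤ ((n : ℝ) * m)⁻¹ * ((n : ℝ) * m * B) := by gcongr
      _ = B := inv_mul_cancel_left₀ h B

end Averages

lemma abs_rinner_sub_le {d : ℕ} {a y z : Euc d} {R r : ℝ} (ha : ‖a‖ ≤ R) (hyz : ‖y - z‖ ≤ r) :
    |rinner a y - rinner a z| ≤ R * r := by
  rw [rinner, rinner, ← inner_sub_right]
  exact (abs_real_inner_le_norm a _).trans
    (mul_le_mul ha hyz (norm_nonneg _) ((norm_nonneg a).trans ha))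

lemma mulVecE_add {d : ℕ} (M N : Matrix (Fin d) (Fin d) ℝ) (w : Euc d) :
    mulVecE (M + N) w = mulVecE M w + mulVecE N w := by
  simp [mulVecE, Matrix.add_mulVec]

lemma mulVecE_smul_one {d : ℕ} (lam : ℝ) (w : Euc d) :
    mulVecE (lam • (1 : Matrix (Fin d) (Fin d) ℝ)) w = lam • w := by
  simp [mulVecE, Matrix.smul_mulVec]

lemma mulVecE_outerMat {d : ℕ} (a w : Euc d) : mulVecE (outerMat a) w = rinner a w • a := by
  ext p
  simp only [mulVecE, outerMat, Matrix.mulVec, dotProduct, rinner, PiLp.inner_apply,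
    RCLike.inner_apply, conj_trivial, PiLp.smul_apply, smul_eq_mul, sum_mul]
  exact sum_congr rfl fun q _ => by ring

lemma mulVecE_Hmat {n m d : ℕ} (a : Fin n → Fin m → Euc d) (c : Fin n → Fin m → ℝ) (w : Euc d) :
    mulVecE (Hmat a c) w = doubleAvg n m (fun i j => (c i j * rinner (a i j) w) • a i j) := by
  simp only [mulVecE, Hmat, doubleAvg, Matrix.smul_mulVec, Matrix.sum_mulVec, WithLp.toLp_smul,
    WithLp.toLp_sum, mul_smul]
  refine congrArg _ (sum_congr rfl fun i _ => sum_congr rfl fun j _ => ?_)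
  rw [← mulVecE_outerMat]
  rfl

lemma mulVecE_mulVecE_inv {d : ℕ} {M : Matrix (Fin d) (Fin d) ℝ} (h : IsUnit M.det) (v : Euc d) :
    mulVecE M (mulVecE M⁻¹ v) = v := by
  simp [mulVecE, Matrix.mulVec_mulVec, Matrix.mul_nonsing_inv M h]

section Coercive

variable {d : ℕ} {M : Matrix (Fin d) (Fin d) ℝ} {lam : ℝ}

lemma mul_norm_le_norm_mulVecE (hM : ∀ w : Euc d, lam * ‖w‖ ^ 2 ≤ inner ℝ (mulVecE M w) w)
    (w : Euc d) : lam * ‖w‖ ≤ ‖mulVecE M w‖ := by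
  rcases (norm_nonneg w).eq_or_lt with hw | hw
  · rw [← hw, mul_zero]
    exact norm_nonneg _
  · refine le_of_mul_le_mul_right ?_ hw
    calc lam * ‖w‖ * ‖w‖ = lam * ‖w‖ ^ 2 := by ring
      _ ≤ inner ℝ (mulVecE M w) w := hM w
      _ ≤ ‖mulVecE M w‖ * ‖w‖ := real_inner_le_norm _ _

lemma isUnit_det_of_coercive (hlam : 0 < lam)
    (hM : ∀ w : Euc d, lam * ‖w‖ ^ 2 ≤ inner ℝ (mulVecE M w) w) : IsUnit M.det := by
  refine isUnit_iff_ne_zero.mpr fun hdet => ?_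
  obtain ⟨v, hv0, hv⟩ := Matrix.exists_mulVec_eq_zero_iff.mpr hdet
  have hbound := mul_norm_le_norm_mulVecE hM (WithLp.toLp 2 v)
  have hnorm : 0 < ‖(WithLp.toLp 2 v : Euc d)‖ := by simpa using hv0
  simp only [mulVecE, hv, WithLp.toLp_zero, norm_zero] at hbound
  nlinarith

lemma norm_sub_mulVecE_inv_le (hlam : 0 < lam)
    (hM : ∀ w : Euc d, lam * ‖w‖ ^ 2 ≤ inner ℝ (mulVecE M w) w) (δ g : Euc d) :
    ‖δ - mulVecE M⁻¹ g‖ ≤ lam⁻¹ * ‖mulVecE M δ - g‖ := by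
  have hunit := isUnit_det_of_coercive hlam hM
  have hδ : δ - mulVecE M⁻¹ g = mulVecE M⁻¹ (mulVecE M δ - g) := by
    simp only [mulVecE, Matrix.mulVec_sub, WithLp.ofLp_sub, WithLp.toLp_sub,
      Matrix.mulVec_mulVec, Matrix.nonsing_inv_mul M hunit, Matrix.one_mulVec, WithLp.toLp_ofLp]
  rw [hδ, le_inv_mul_iff₀ hlam]
  simpa [mulVecE_mulVecE_inv hunit] using
    mul_norm_le_norm_mulVecE hM (mulVecE M⁻¹ (mulVecE M δ - g))

end Coercive

lemma le_inner_mulVecE_Hmat_add_smul_one {n m d : ℕ} (a : Fin n → Fin m → Euc d)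
    {c : Fin n → Fin m → ℝ} (hc : ∀ i j, 0 ≤ c i j) (lam : ℝ) (w : Euc d) :
    lam * ‖w‖ ^ 2 ≤ inner ℝ (mulVecE (Hmat a c + lam • (1 : Matrix (Fin d) (Fin d) ℝ)) w) w := by
  have hH : 0 ≤ inner ℝ (mulVecE (Hmat a c) w) w := by
    rw [mulVecE_Hmat, doubleAvg, real_inner_smul_left, sum_inner]
    refine mul_nonneg (by positivity) (sum_nonneg fun i _ => ?_)
    rw [sum_inner]
    refine sum_nonneg fun j _ => ?_
    rw [real_inner_smul_left, mul_assoc]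
    exact mul_nonneg (hc i j) (mul_self_nonneg _)
  rw [mulVecE_add, mulVecE_smul_one, inner_add_left, real_inner_smul_left,
    real_inner_self_eq_norm_sq]
  linarith

lemma ConvexOn.deriv_deriv_nonneg {f : ℝ → ℝ} (hconv : ConvexOn ℝ Set.univ f)
    (hf : Differentiable ℝ f) (u : ℝ) : 0 ≤ deriv (deriv f) u :=
  Monotone.deriv_nonneg fun s t hst =>
    hconv.monotoneOn_deriv (fun v _ => hf v) (Set.mem_univ s) (Set.mem_univ t) hst

lemma abs_mul_sub_sub_sub_le {f f' : ℝ → ℝ} {ν ρ c s t : ℝ}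
    (hf : ∀ u, HasDerivAt f (f' u) u) (hν : 0 ≤ ν)
    (hlip : ∀ u v, |f' u - f' v| ≤ ν * |u - v|) (hc : |c - f' t| ≤ ν * ρ) (hst : |s - t| ≤ ρ) :
    |c * (s - t) - (f s - f t)| ≤ 2 * ν * ρ ^ 2 := by
  have hg : ∀ u ∈ Set.uIcc t s,
      HasDerivWithinAt (fun v => c * v - f v) (c - f' u) (Set.uIcc t s) u := fun u _ =>
    (((hasDerivAt_id u).const_mul c).sub (hf u)).hasDerivWithinAt.congr_deriv (by simp)
  have hbound : ∀ u ∈ Set.uIcc t s, ‖c - f' u‖ ≤ 2 * ν * ρ := fun u hu =>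
    calc ‖c - f' u‖ ≤ |c - f' t| + |f' u - f' t| := by
          rw [Real.norm_eq_abs, abs_sub_comm (f' u)]; exact abs_sub_le _ _ _
      _ ≤ ν * ρ + ν * ρ := by
          gcongr
          exact (hlip u t).trans
            (mul_le_mul_of_nonneg_left ((Set.abs_sub_left_of_mem_uIcc hu).trans hst) hν)
      _ = 2 * ν * ρ := by ring
  have hmvt := (convex_uIcc t s).norm_image_sub_le_of_norm_hasDerivWithin_le hg hbound
    Set.left_mem_uIcc Set.right_mem_uIcc
  rw [Real.norm_eq_abs, Real.norm_eq_abs] at hmvt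
  calc |c * (s - t) - (f s - f t)| = |c * s - f s - (c * t - f t)| := by ring_nf
    _ ≤ 2 * ν * ρ * |s - t| := hmvt
    _ ≤ 2 * ν * ρ * ρ := by have := (abs_nonneg _).trans hst; gcongr
    _ = 2 * ν * ρ ^ 2 := by ring

lemma sum_range_mul_mem_of_convex {s : Set ℝ} (hs : Convex ℝ s) {k : ℕ} {ρ z : ℕ → ℝ}
    (hρ0 : ∀ t, t ≤ k → 0 ≤ ρ t) (hρ1 : ∑ t ∈ range (k + 1), ρ t = 1)
    (hz : ∀ t, t ≤ k → z t ∈ s) : ∑ t ∈ range (k + 1), ρ t * z t ∈ s :=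
  hs.sum_mem (fun t ht => hρ0 t (Nat.lt_succ_iff.mp (mem_range.mp ht))) hρ1
    (fun t ht => hz t (Nat.lt_succ_iff.mp (mem_range.mp ht)))

lemma IsLocalMin.hasGradientAt_eq_zero {F : Type*} [NormedAddCommGroup F] [InnerProductSpace ℝ F]
    [CompleteSpace F] {f : F → ℝ} {a g : F} (h : IsLocalMin f a) (hf : HasGradientAt f g a) :
    g = 0 := by
  simpa using h.hasFDerivAt_eq_zero hf.hasFDerivAt

section Objective

variable {n m d : ℕ}

def objectiveGrad (a : Fin n → Fin m → Euc d) (φ' : Fin n → Fin m → ℝ → ℝ) (lam : ℝ)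
    (y : Euc d) : Euc d :=
  doubleAvg n m (fun i j => φ' i j (rinner (a i j) y) • a i j) + lam • y

lemma hasGradientAt_objective {φ : Fin n → Fin m → ℝ → ℝ} (hφ : ∀ i j, Differentiable ℝ (φ i j))
    (a : Fin n → Fin m → Euc d) (lam : ℝ) (y : Euc d) :
    HasGradientAt
      (fun z => ((n : ℝ) * m)⁻¹ * (∑ i, ∑ j, φ i j (rinner (a i j) z)) + lam / 2 * ‖z‖ ^ 2)
      (objectiveGrad a (fun i j => deriv (φ i j)) lam y) y := by
  have hterm : ∀ i j, HasFDerivAt (fun z => φ i j (rinner (a i j) z))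
      (deriv (φ i j) (rinner (a i j) y) • innerSL ℝ (a i j)) y := fun i j =>
    (hφ i j _).hasDerivAt.comp_hasFDerivAt y (innerSL ℝ (a i j)).hasFDerivAt
  have hsum := (HasFDerivAt.fun_sum (u := univ) fun i _ =>
    HasFDerivAt.fun_sum (u := univ) fun j _ => hterm i j).const_mul ((n : ℝ) * m)⁻¹
  refine hasGradientAt_iff_hasFDerivAt.mpr ((hsum.add
    ((hasStrictFDerivAt_norm_sq y).hasFDerivAt.const_mul (lam / 2))).congr_fderiv ?_)
  ext w
  simp [objectiveGrad, doubleAvg, rinner, real_inner_comm w]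
  ring

def newtonResidual (a : Fin n → Fin m → Euc d) (c : Fin n → Fin m → ℝ)
    (φ' : Fin n → Fin m → ℝ → ℝ) (lam : ℝ) (y z : Euc d) : Euc d :=
  mulVecE (Hmat a c + lam • (1 : Matrix (Fin d) (Fin d) ℝ)) (y - z)
    - (objectiveGrad a φ' lam y - objectiveGrad a φ' lam z)

def newtonStep (a : Fin n → Fin m → Euc d) (c : Fin n → Fin m → ℝ)
    (φ' : Fin n → Fin m → ℝ → ℝ) (lam : ℝ) (y : Euc d) : Euc d :=
  y - mulVecE (Hmat a c + lam • (1 : Matrix (Fin d) (Fin d) ℝ))⁻¹ (objectiveGrad a φ' lam y)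

lemma newtonResidual_eq (a : Fin n → Fin m → Euc d) (c : Fin n → Fin m → ℝ)
    (φ' : Fin n → Fin m → ℝ → ℝ) (lam : ℝ) (y z : Euc d) :
    newtonResidual a c φ' lam y z
      = doubleAvg n m (fun i j => (c i j * rinner (a i j) (y - z)
          - (φ' i j (rinner (a i j) y) - φ' i j (rinner (a i j) z))) • a i j) := by
  simp only [newtonResidual, sub_smul, doubleAvg_sub, objectiveGrad, mulVecE_add, mulVecE_Hmat,
    mulVecE_smul_one, smul_sub]
  abel

variable {φ' φ'' : Fin n → Fin m → ℝ → ℝ} {ν lam R : ℝ} {a : Fin n → Fin m → Euc d}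

lemma norm_newtonResidual_le (hderiv : ∀ i j u, HasDerivAt (φ' i j) (φ'' i j u) u) (hν : 0 ≤ ν)
    (hlip : ∀ i j s t, |φ'' i j s - φ'' i j t| ≤ ν * |s - t|) (hR : 0 ≤ R)
    (hRub : ∀ i j, ‖a i j‖ ≤ R) {c : Fin n → Fin m → ℝ} {y z : Euc d} {r : ℝ}
    (hyz : ‖y - z‖ ≤ r) (hc : ∀ i j, |c i j - φ'' i j (rinner (a i j) z)| ≤ ν * (R * r)) :
    ‖newtonResidual a c φ' lam y z‖ ≤ 2 * ν * R ^ 3 * r ^ 2 := by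
  have hr : 0 ≤ r := (norm_nonneg _).trans hyz
  rw [newtonResidual_eq]
  refine norm_doubleAvg_le (by positivity) fun i j => ?_
  have hsec := abs_mul_sub_sub_sub_le (hderiv i j) hν (hlip i j) (hc i j)
    (abs_rinner_sub_le (hRub i j) hyz)
  rw [rinner, rinner, ← inner_sub_right] at hsec
  calc ‖(c i j * rinner (a i j) (y - z)
          - (φ' i j (rinner (a i j) y) - φ' i j (rinner (a i j) z))) • a i j‖
      ≤ 2 * ν * (R * r) ^ 2 * R := by
        rw [norm_smul, Real.norm_eq_abs]
        exact mul_le_mul hsec (hRub i j) (norm_nonneg _) (by positivity)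
    _ = 2 * ν * R ^ 3 * r ^ 2 := by ring

lemma norm_newtonStep_sub_le (hderiv : ∀ i j u, HasDerivAt (φ' i j) (φ'' i j u) u) (hν : 0 ≤ ν)
    (hlip : ∀ i j s t, |φ'' i j s - φ'' i j t| ≤ ν * |s - t|) (hR : 0 ≤ R)
    (hRub : ∀ i j, ‖a i j‖ ≤ R) (hlam : 0 < lam) {c : Fin n → Fin m → ℝ} (hc0 : ∀ i j, 0 ≤ c i j)
    {y z : Euc d} (hz : objectiveGrad a φ' lam z = 0) {r : ℝ} (hyz : ‖y - z‖ ≤ r)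
    (hc : ∀ i j, |c i j - φ'' i j (rinner (a i j) z)| ≤ ν * (R * r)) :
    ‖newtonStep a c φ' lam y - z‖ ≤ lam⁻¹ * (2 * ν * R ^ 3 * r ^ 2) := by
  have hM := le_inner_mulVecE_Hmat_add_smul_one a hc0 lam
  calc ‖newtonStep a c φ' lam y - z‖
      = ‖(y - z) - mulVecE _⁻¹ (objectiveGrad a φ' lam y - objectiveGrad a φ' lam z)‖ := by
        rw [newtonStep, hz, sub_zero, sub_right_comm]
    _ ≤ lam⁻¹ * ‖newtonResidual a c φ' lam y z‖ := norm_sub_mulVecE_inv_le hlam hM _ _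
    _ ≤ lam⁻¹ * (2 * ν * R ^ 3 * r ^ 2) := by
        gcongr
        exact norm_newtonResidual_le hderiv hν hlip hR hRub hyz hc

theorem norm_iterate_sub_le_of_newtonStep (hderiv : ∀ i j u, HasDerivAt (φ' i j) (φ'' i j u) u)
    (hν : 0 ≤ ν) (hlip : ∀ i j s t, |φ'' i j s - φ'' i j t| ≤ ν * |s - t|)
    (hφ''_nonneg : ∀ i j u, 0 ≤ φ'' i j u) (hR : 0 ≤ R) (hRub : ∀ i j, ‖a i j‖ ≤ R)
    (hlam : 0 < lam) {xstar : Euc d} (hstar : objectiveGrad a φ' lam xstar = 0)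
    {x : ℕ → Euc d} {c : Fin n → Fin m → ℕ → ℝ}
    (hcc : ∀ k i j, ∃ ρ : ℕ → ℝ, (∀ t, t ≤ k → 0 ≤ ρ t) ∧
        (∑ t ∈ range (k + 1), ρ t) = 1 ∧
        c i j k = ∑ t ∈ range (k + 1), ρ t * φ'' i j (rinner (a i j) (x t)))
    (hstep : ∀ k, x (k + 1) = newtonStep a (fun i j => c i j k) φ' lam (x k))
    {r : ℝ} (hr : 2 * ν * R ^ 3 * r ≤ lam) (h0 : ‖x 0 - xstar‖ ≤ r) (k : ℕ) :
    ‖x k - xstar‖ ≤ r := by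
  induction k using Nat.strong_induction_on with
  | _ k ih =>
  cases k with
  | zero => exact h0
  | succ k =>
    have hball : ∀ t, t ≤ k → ‖x t - xstar‖ ≤ r := fun t ht => ih t (Nat.lt_succ_of_le ht)
    have hc_mem : ∀ i j (s : Set ℝ), Convex ℝ s →
        (∀ t, t ≤ k → φ'' i j (rinner (a i j) (x t)) ∈ s) → c i j k ∈ s := by
      intro i j s hs hmem
      obtain ⟨ρ, hρ0, hρ1, hc⟩ := hcc k i j
      exact hc ▸ sum_range_mul_mem_of_convex hs hρ0 hρ1 hmem
    have hc0 : ∀ i j, 0 ≤ c i j k := fun i j =>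
      hc_mem i j _ (convex_Ici 0) fun _ _ => hφ''_nonneg i j _
    have hc : ∀ i j, |c i j k - φ'' i j (rinner (a i j) xstar)| ≤ ν * (R * r) := fun i j => by
      rw [← Real.dist_eq, ← Metric.mem_closedBall]
      refine hc_mem i j _ (convex_closedBall _ _) fun t ht => ?_
      rw [Metric.mem_closedBall, Real.dist_eq]
      exact (hlip i j _ _).trans
        (mul_le_mul_of_nonneg_left (abs_rinner_sub_le (hRub i j) (hball t ht)) hν)
    have hr0 : 0 ≤ r := (norm_nonneg _).trans h0
    rw [hstep]
    calc _ ≤ lam⁻¹ * (2 * ν * R ^ 3 * r ^ 2) :=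
          norm_newtonStep_sub_le hderiv hν hlip hR hRub hlam hc0 hstar (hball k le_rfl) hc
      _ ≤ r := by
          rw [inv_mul_le_iff₀ hlam, sq, ← mul_assoc]
          exact mul_le_mul_of_nonneg_right hr hr0

end Objective

theorem nl1_iterates_stay_in_neighborhood_general
    {n m d : ℕ}
    (ν lam R : ℝ) (hν : 0 < ν) (hlam : 0 < lam) (hR : 0 < R)
    (a : Fin n → Fin m → Euc d) (φ : Fin n → Fin m → ℝ → ℝ)
    (φ'' : Fin n → Fin m → ℝ → ℝ) (hφ'' : ∀ i j, φ'' i j = deriv (deriv (φ i j)))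
    (hsmooth : ∀ i j, ContDiff ℝ 2 (φ i j))
    (hlip : ∀ i j s t, |φ'' i j s - φ'' i j t| ≤ ν * |s - t|)
    (hconv : ∀ i j, ConvexOn ℝ Set.univ (φ i j))
    (hRub : ∀ i j, ‖a i j‖ ≤ R)
    (P : Euc d → ℝ)
    (hP : ∀ y, P y = ((n : ℝ) * m)⁻¹ * (∑ i, ∑ j, φ i j (rinner (a i j) y))
        + lam / 2 * ‖y‖ ^ 2)
    (xstar : Euc d) (hmin : ∀ y, P xstar ≤ P y)
    (x : ℕ → Euc d) (c : Fin n → Fin m → ℕ → ℝ)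
    (hcc : ∀ k i j, ∃ ρ : ℕ → ℝ, (∀ t, t ≤ k → 0 ≤ ρ t) ∧
        (∑ t ∈ Finset.range (k + 1), ρ t) = 1 ∧
        c i j k = ∑ t ∈ Finset.range (k + 1), ρ t * φ'' i j (rinner (a i j) (x t)))
    (hstep : ∀ k, x (k + 1) = x k - mulVecE
        (Hmat a (fun i j => c i j k) + lam • (1 : Matrix (Fin d) (Fin d) ℝ))⁻¹
        (gradient P (x k)))
    (h0 : ‖x 0 - xstar‖ ^ 2 ≤ lam ^ 2 / (12 * ν ^ 2 * R ^ 6)) :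
    ∀ k, ‖x k - xstar‖ ^ 2 ≤ lam ^ 2 / (12 * ν ^ 2 * R ^ 6) := by
  have hdiff : ∀ i j, Differentiable ℝ (φ i j) := fun i j =>
    (hsmooth i j).differentiable two_ne_zero
  have hgrad : ∀ y, HasGradientAt P (objectiveGrad a (fun i j => deriv (φ i j)) lam y) y := by
    simpa only [← funext hP] using hasGradientAt_objective hdiff a lam
  set r := √(lam ^ 2 / (12 * ν ^ 2 * R ^ 6))
  have hr_sq : r ^ 2 = lam ^ 2 / (12 * ν ^ 2 * R ^ 6) := Real.sq_sqrt (by positivity)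
  have hr : 2 * ν * R ^ 3 * r ≤ lam := by
    have hr0 : 0 ≤ r := Real.sqrt_nonneg _
    have hsq : (2 * ν * R ^ 3 * r) ^ 2 = lam ^ 2 / 3 := by
      rw [mul_pow, hr_sq]
      field_simp
      ring
    nlinarith
  intro k
  have hk := norm_iterate_sub_le_of_newtonStep (φ'' := φ'')
    (fun i j u => hφ'' i j ▸ ((hsmooth i j).differentiable_deriv_two u).hasDerivAt) hν.le hlip
    (fun i j u => hφ'' i j ▸ (hconv i j).deriv_deriv_nonneg (hdiff i j) u) hR.le hRub hlam
    (IsLocalMin.hasGradientAt_eq_zero (Eventually.of_forall hmin) (hgrad xstar))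
    hcc (fun k => by rw [hstep, (hgrad (x k)).gradient]; rfl) hr (Real.le_sqrt_of_sq_le h0) k
  calc ‖x k - xstar‖ ^ 2 ≤ r ^ 2 := by gcongr
    _ = lam ^ 2 / (12 * ν ^ 2 * R ^ 6) := hr_sq

/-- iterates of NL1 remain in the local neighborhood (Lemma 1). -/
theorem nl1_iterates_stay_in_neighborhood
    {n m d : ℕ} (hn : 0 < n) (hm : 0 < m) (hd : 0 < d)
    (ν γ lam R : ℝ) (hν : 0 < ν) (hγ : 0 < γ) (hlam : 0 < lam) (hR : 0 < R)
    (a : Fin n → Fin m → Euc d) (φ : Fin n → Fin m → ℝ → ℝ)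
    (φ'' : Fin n → Fin m → ℝ → ℝ) (hφ'' : ∀ i j, φ'' i j = deriv (deriv (φ i j)))
    (hsmooth : ∀ i j, ContDiff ℝ 2 (φ i j))
    (hbdd : ∀ i j t, |φ'' i j t| ≤ γ)
    (hlip : ∀ i j s t, |φ'' i j s - φ'' i j t| ≤ ν * |s - t|)
    (hconv : ∀ i j, ConvexOn ℝ Set.univ (φ i j))
    (hRub : ∀ i j, ‖a i j‖ ≤ R) (hRmem : ∃ i j, R = ‖a i j‖)
    (P : Euc d → ℝ)
    (hP : ∀ y, P y = ((n : ℝ) * m)⁻¹ * (∑ i, ∑ j, φ i j (rinner (a i j) y))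
        + lam / 2 * ‖y‖ ^ 2)
    (xstar : Euc d) (hmin : ∀ y, P xstar ≤ P y)
    (x : ℕ → Euc d) (c : Fin n → Fin m → ℕ → ℝ)
    (hcc : ∀ k i j, ∃ ρ : ℕ → ℝ, (∀ t, t ≤ k → 0 ≤ ρ t) ∧
        (∑ t ∈ Finset.range (k + 1), ρ t) = 1 ∧
        c i j k = ∑ t ∈ Finset.range (k + 1), ρ t * φ'' i j (rinner (a i j) (x t)))
    (hstep : ∀ k, x (k + 1) = x k - mulVecE
        (Hmat a (fun i j => c i j k) + lam • (1 : Matrix (Fin d) (Fin d) ℝ))⁻¹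
        (gradient P (x k)))
    (h0 : ‖x 0 - xstar‖ ^ 2 ≤ lam ^ 2 / (12 * ν ^ 2 * R ^ 6)) :
    ∀ k, ‖x k - xstar‖ ^ 2 ≤ lam ^ 2 / (12 * ν ^ 2 * R ^ 6) :=
  nl1_iterates_stay_in_neighborhood_general ν lam R hν hlam hR a φ φ'' hφ'' hsmooth hlip hconv hRub
    P hP xstar hmin x c hcc hstep h0
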